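/- Let g ∈ M_D(ℝ) be symmetric invertible, b antisymmetric, ℰ := g + b. Let F be the 2D×D block matrix F = [[ℰ],[I]] (upper block ℰ, lower block the identity). Then F g⁻¹ Fᵀ − η = ℋ', where η = [[0,I],[I,0]] and ℋ' = [[g − bg⁻¹b, bg⁻¹],[−g⁻¹b, g⁻¹]] is the generalized metric with upper indices (ℋ' = η ℋ η with ℋ = [[g⁻¹, −g⁻¹b],[bg⁻¹, g − bg⁻¹b]]). -/

import Mathlib

open Matrix

namespace Matrix

variable {m₁ m₂ n R : Type*}

theorem fromBlocks_sub [Sub R] {p q : Type*} (A : Matrix m₁ p R) (B : Matrix m₁ q R)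
    (C : Matrix m₂ p R) (D : Matrix m₂ q R) (A' : Matrix m₁ p R) (B' : Matrix m₁ q R)
    (C' : Matrix m₂ p R) (D' : Matrix m₂ q R) :
    fromBlocks A B C D - fromBlocks A' B' C' D' =
      fromBlocks (A - A') (B - B') (C - C') (D - D') := by
  ext (_ | _) (_ | _) <;> rfl

theorem fromRows_mul_mul_transpose_fromRows [Fintype n] [CommSemiring R]
    (A₁ : Matrix m₁ n R) (A₂ : Matrix m₂ n R) (M : Matrix n n R) :
    fromRows A₁ A₂ * M * (fromRows A₁ A₂)ᵀ =
      fromBlocks (A₁ * M * A₁ᵀ) (A₁ * M * A₂ᵀ) (A₂ * M * A₁ᵀ) (A₂ * M * A₂ᵀ) := by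
  rw [transpose_fromRows, fromRows_mul, fromRows_mul_fromCols]

variable [Fintype n] [DecidableEq n] [CommRing R]

theorem add_mul_nonsing_inv_mul_sub {g : Matrix n n R} (hg : IsUnit g) (b : Matrix n n R) :
    (g + b) * g⁻¹ * (g - b) = g - b * g⁻¹ * b := by
  have hdet : IsUnit g.det := (isUnit_iff_isUnit_det g).mp hg
  simp only [add_mul, mul_sub, Matrix.mul_assoc, nonsing_inv_mul g hdet, mul_one]
  rw [← Matrix.mul_assoc g, mul_nonsing_inv g hdet, one_mul]
  abel

end Matrix

theorem vielbein_identity (D : ℕ) (g b : Matrix (Fin D) (Fin D) ℝ)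
    (hg : gᵀ = g) (hginv : IsUnit g) (hb : bᵀ = -b) :
    let E : Matrix (Fin D) (Fin D) ℝ := g + b
    let F : Matrix (Fin D ⊕ Fin D) (Fin D) ℝ := Matrix.fromRows E 1
    let η : Matrix (Fin D ⊕ Fin D) (Fin D ⊕ Fin D) ℝ := Matrix.fromBlocks 0 1 1 0
    F * g⁻¹ * Fᵀ - η =
      Matrix.fromBlocks (g - b * g⁻¹ * b) (b * g⁻¹) (-(g⁻¹ * b)) g⁻¹ := by
  intro E F η
  have hdet : IsUnit g.det := (isUnit_iff_isUnit_det g).mp hginv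
  have hEt : Eᵀ = g - b := by rw [transpose_add, hg, hb, sub_eq_add_neg]
  rw [fromRows_mul_mul_transpose_fromRows, fromBlocks_sub, hEt, transpose_one,
    add_mul_nonsing_inv_mul_sub hginv, add_mul, mul_nonsing_inv g hdet, one_mul, mul_sub,
    nonsing_inv_mul g hdet]
  simp only [mul_one, sub_zero, add_sub_cancel_left, sub_sub_cancel_left]
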